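/- Under the adaptive-sliding control scheme, the tracking error and its velocity converge to the origin. Precisely: let n, p, m be positive natural numbers, let q, q_d : ℝ → ℝⁿ be twice continuously differentiable with q_d, q_d', q_d'' bounded, set Δq = q − q_d, let λ > 0, and define the sliding vector s(t) = Δq'(t) + λ·Δq(t). Let M, C : ℝ → Matrix n n ℝ be continuously differentiable with M(t) symmetric and there exist 0 < m₀ ≤ m₁ with m₀‖x‖² ≤ xᵀM(t)x ≤ m₁‖x‖² for all t and x, with C bounded, and with the skew-symmetry property xᵀ(M'(t) − 2C(t))x = 0 for all t, x. Let Y : ℝ → Matrix n p ℝ and J : ℝ → Matrix m n ℝ be continuous and bounded, let θ_d ∈ ℝᵖ and F_ext ∈ ℝᵐ be constant, let K_v, K_p be symmetric positive definite n×n matrices, L_d a symmetric positive definite p×p matrix and P a symmetric positive definite m×m matrix. Suppose the estimates θ̂ : ℝ → ℝᵖ and F̂ : ℝ → ℝᵐ are differentiable and satisfy the adaptive laws θ̂'(t) = −L_d · Y(t)ᵀ · s(t) and F̂'(t) = P⁻¹ · J(t) · s(t), and that the closed-loop dynamics M(t)·s'(t) + C(t)·s(t) + Y(t)·(θ_d −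 θ̂(t)) + K_v·Δq'(t) + K_p·Δq(t) − J(t)ᵀ·(F_ext − F̂(t)) = 0 holds for all t ≥ 0. Then Δq(t) → 0 and Δq'(t) → 0 as t → ∞. -/

import Mathlib

open Matrix Filter Topology RealInnerProductSpace

/-!
With `θ̃ = θ_d - θ̂` and `F̃ = F_ext - F̂`, take the Lyapunov function
`V = ½ (sᵀ M s + Δqᵀ (K_p + λ K_v) Δq + θ̃ᵀ L_d⁻¹ θ̃ + F̃ᵀ P F̃)`.
Along the closed loop, the skew-symmetry of `M' - 2C` and the two adaptive laws cancel every
indefinite term of `V'`, leaving `V' = -f` with `f = Δq'ᵀ K_v Δq' + λ Δqᵀ K_p Δq ≥ 0`.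
So `V` is bounded, hence so are `s`, `Δq`, `θ̃`, `F̃` and `Δq' = s - λ Δq`; the dynamics together
with the coercivity of `M` then bound `s'` and `Δq''`, so `f'` is bounded. Barbalat's lemma gives
`f → 0`, and `f` dominates both `‖Δq‖²` and `‖Δq'‖²`.
-/

open WithLp Asymptotics Set

section QuadraticForms

variable {ι κ : Type*} [Fintype ι] [Fintype κ]

theorem inner_toLp_mulVec (x : EuclideanSpace ℝ ι) (A : Matrix ι κ ℝ) (y : κ → ℝ) :
    ⟪x, toLp 2 (A *ᵥ y)⟫ = ofLp x ⬝ᵥ A *ᵥ y := by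
  simp [EuclideanSpace.inner_eq_star_dotProduct, dotProduct_comm]

theorem inner_toLp_mulVec_comm (x : EuclideanSpace ℝ ι) (A : Matrix ι κ ℝ)
    (y : EuclideanSpace ℝ κ) :
    ⟪x, toLp 2 (A *ᵥ ofLp y)⟫ = ⟪y, toLp 2 (Aᵀ *ᵥ ofLp x)⟫ := by
  rw [inner_toLp_mulVec, inner_toLp_mulVec, dotProduct_mulVec, mulVec_transpose, dotProduct_comm]

theorem inner_toLp_mulVec_smul_smul (A : Matrix ι ι ℝ) (r : ℝ) (x : EuclideanSpace ℝ ι) :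
    ⟪r • x, toLp 2 (A *ᵥ ofLp (r • x))⟫ = r ^ 2 * ⟪x, toLp 2 (A *ᵥ ofLp x)⟫ := by
  rw [inner_toLp_mulVec, inner_toLp_mulVec, ofLp_smul, mulVec_smul, smul_dotProduct,
    dotProduct_smul, smul_eq_mul, smul_eq_mul, ← mul_assoc, sq]

theorem inner_toLp_add_smul_mulVec (A B : Matrix ι ι ℝ) (r : ℝ) (x : EuclideanSpace ℝ ι) :
    ⟪x, toLp 2 ((A + r • B) *ᵥ ofLp x)⟫
      = ⟪x, toLp 2 (A *ᵥ ofLp x)⟫ + r * ⟪x, toLp 2 (B *ᵥ ofLp x)⟫ := by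
  rw [inner_toLp_mulVec, inner_toLp_mulVec, inner_toLp_mulVec, add_mulVec, smul_mulVec,
    dotProduct_add, dotProduct_smul, smul_eq_mul]

theorem exists_pos_mul_norm_sq_le_inner_toLp_mulVec (A : Matrix ι ι ℝ)
    (hA : ∀ x : EuclideanSpace ℝ ι, x ≠ 0 → 0 < ⟪x, toLp 2 (A *ᵥ ofLp x)⟫) :
    ∃ c > 0, ∀ x : EuclideanSpace ℝ ι, c * ‖x‖ ^ 2 ≤ ⟪x, toLp 2 (A *ᵥ ofLp x)⟫ := by
  have hcont : Continuous fun x : EuclideanSpace ℝ ι => ⟪x, toLp 2 (A *ᵥ ofLp x)⟫ := by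
    fun_prop
  obtain ⟨c, hc, hcA⟩ := (isCompact_sphere (0 : EuclideanSpace ℝ ι) 1).exists_forall_le'
    hcont.continuousOn fun x hx => hA x (ne_zero_of_mem_unit_sphere ⟨x, hx⟩)
  refine ⟨c, hc, fun x => ?_⟩
  rcases eq_or_ne x 0 with rfl | hx
  · simp
  have hx' : 0 < ‖x‖ := norm_pos_iff.2 hx
  have hu : ‖x‖⁻¹ • x ∈ Metric.sphere (0 : EuclideanSpace ℝ ι) 1 := by
    simp [norm_smul, hx'.ne']
  calc c * ‖x‖ ^ 2 ≤ ⟪‖x‖⁻¹ • x, toLp 2 (A *ᵥ ofLp (‖x‖⁻¹ • x))⟫ * ‖x‖ ^ 2 := by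
        gcongr; exact hcA _ hu
    _ = ⟪x, toLp 2 (A *ᵥ ofLp x)⟫ := by
        rw [inner_toLp_mulVec_smul_smul, inv_pow, mul_comm, ← mul_assoc,
          mul_inv_cancel₀ (by positivity), one_mul]

theorem Matrix.posDef_of_inner_toLp_mulVec_pos {A : Matrix ι ι ℝ} (hA : Aᵀ = A)
    (hpos : ∀ x : EuclideanSpace ℝ ι, x ≠ 0 → 0 < ⟪x, toLp 2 (A *ᵥ ofLp x)⟫) : A.PosDef :=
  .of_dotProduct_mulVec_pos (by rwa [IsHermitian, conjTranspose_eq_transpose_of_trivial])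
    fun x hx => by simpa [inner_toLp_mulVec] using hpos (toLp 2 x) (by simpa using hx)

theorem Matrix.PosDef.inner_toLp_mulVec_pos {A : Matrix ι ι ℝ} (hA : A.PosDef)
    (x : EuclideanSpace ℝ ι) (hx : x ≠ 0) : 0 < ⟪x, toLp 2 (A *ᵥ ofLp x)⟫ := by
  simpa [inner_toLp_mulVec] using hA.dotProduct_mulVec_pos (x := ofLp x) (by simpa using hx)

end QuadraticForms

section Calculus

variable {ι κ : Type*} [Fintype ι] [Fintype κ]

theorem HasDerivAt.ofLp {u : ℝ → EuclideanSpace ℝ ι} {u' : EuclideanSpace ℝ ι} {t : ℝ}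
    (hu : HasDerivAt u u' t) : HasDerivAt (fun τ => ofLp (u τ)) (ofLp u') t :=
  (PiLp.hasFDerivAt_ofLp 2 (u t)).comp_hasDerivAt t hu

theorem hasDerivAt_toLp_mulVec {A : ℝ → Matrix ι κ ℝ} {A' : Matrix ι κ ℝ}
    {v : ℝ → EuclideanSpace ℝ κ} {v' : EuclideanSpace ℝ κ} {t : ℝ}
    (hA : ∀ i j, HasDerivAt (fun τ => A τ i j) (A' i j) t) (hv : HasDerivAt v v' t) :
    HasDerivAt (fun τ => toLp 2 (A τ *ᵥ ofLp (v τ)))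
      (toLp 2 (A' *ᵥ ofLp (v t) + A t *ᵥ ofLp v')) t := by
  have hvj := hasDerivAt_pi.1 hv.ofLp
  have hAv : HasDerivAt (fun τ => A τ *ᵥ ofLp (v τ)) (A' *ᵥ ofLp (v t) + A t *ᵥ ofLp v') t :=
    hasDerivAt_pi.2 fun i => by
      simp only [mulVec, dotProduct, Pi.add_apply, ← Finset.sum_add_distrib]
      exact HasDerivAt.fun_sum fun j _ => (hA i j).mul (hvj j)
  exact (PiLp.hasFDerivAt_toLp 2 _).comp_hasDerivAt t hAv

theorem hasDerivAt_inner_toLp_mulVec_self {A : ℝ → Matrix ι ι ℝ} {A' : Matrix ι ι ℝ}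
    {u : ℝ → EuclideanSpace ℝ ι} {u' : EuclideanSpace ℝ ι} {t : ℝ}
    (hA : ∀ i j, HasDerivAt (fun τ => A τ i j) (A' i j) t) (hAt : (A t)ᵀ = A t)
    (hu : HasDerivAt u u' t) :
    HasDerivAt (fun τ => ⟪u τ, toLp 2 (A τ *ᵥ ofLp (u τ))⟫)
      (⟪u t, toLp 2 (A' *ᵥ ofLp (u t))⟫ + 2 * ⟪u t, toLp 2 (A t *ᵥ ofLp u')⟫) t := by
  refine (hu.inner ℝ (hasDerivAt_toLp_mulVec hA hu)).congr_deriv ?_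
  rw [toLp_add, inner_add_right, inner_toLp_mulVec_comm u', hAt]
  ring

theorem hasDerivAt_inner_toLp_const_mulVec_self {A : Matrix ι ι ℝ} (hA : Aᵀ = A)
    {u : ℝ → EuclideanSpace ℝ ι} {u' : EuclideanSpace ℝ ι} {t : ℝ} (hu : HasDerivAt u u' t) :
    HasDerivAt (fun τ => ⟪u τ, toLp 2 (A *ᵥ ofLp (u τ))⟫)
      (2 * ⟪u t, toLp 2 (A *ᵥ ofLp u')⟫) t := by
  simpa using hasDerivAt_inner_toLp_mulVec_self (A := fun _ => A) (A' := 0)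
    (fun i j => hasDerivAt_const t (A i j)) hA hu

theorem sub_le_mul_sub_of_hasDerivAt_le {f f' : ℝ → ℝ} {a b C : ℝ}
    (hf : ∀ x ∈ Icc a b, HasDerivAt f (f' x) x) (hC : ∀ x ∈ Icc a b, f' x ≤ C) (hab : a ≤ b) :
    f b - f a ≤ C * (b - a) := by
  refine (convex_Icc a b).image_sub_le_mul_sub_of_deriv_le
    (fun x hx => (hf x hx).continuousAt.continuousWithinAt)
    (fun x hx => (hf x (interior_subset hx)).differentiableAt.differentiableWithinAt)
    (fun x hx => ?_) a (left_mem_Icc.2 hab) b (right_mem_Icc.2 hab) hab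
  rw [(hf x (interior_subset hx)).deriv]
  exact hC x (interior_subset hx)

end Calculus

theorem tendsto_sub_comp_add_of_antitoneOn {V : ℝ → ℝ} {T b : ℝ} (hV : AntitoneOn V (Ici T))
    (hb : ∀ t, T ≤ t → b ≤ V t) (δ : ℝ) : Tendsto (fun t => V t - V (t + δ)) atTop (𝓝 0) := by
  set g := fun u => V (max u T)
  have hg : Antitone g := fun x y hxy =>
    hV (le_max_right x T) (le_max_right y T) (max_le_max_right T hxy)
  have hg_lim := tendsto_atTop_ciInf hg ⟨b, by
    rintro _ ⟨u, rfl⟩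
    exact hb _ (le_max_right u T)⟩
  have hgap : Tendsto (fun t => g t - g (t + δ)) atTop (𝓝 0) := by
    simpa using hg_lim.sub (hg_lim.comp (tendsto_atTop_add_const_right _ δ tendsto_id))
  refine hgap.congr' (((eventually_ge_atTop T).and (eventually_ge_atTop (T - δ))).mono ?_)
  rintro t ⟨ht, htδ⟩
  simp only [g, max_eq_left ht, max_eq_left (show T ≤ t + δ by linarith)]

theorem tendsto_zero_of_hasDerivAt_neg {V f f' : ℝ → ℝ}
    (hV : IsBoundedUnder (· ≥ ·) atTop V) (hf : ∀ᶠ t in atTop, 0 ≤ f t)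
    (hVf : ∀ᶠ t in atTop, HasDerivAt V (-f t) t) (hff' : ∀ᶠ t in atTop, HasDerivAt f (f' t) t)
    (hf' : f' =O[atTop] (fun _ => (1 : ℝ))) : Tendsto f atTop (𝓝 0) := by
  obtain ⟨b, hb⟩ := hV
  obtain ⟨K, hK0, hK⟩ := hf'.exists_pos
  obtain ⟨T, hT⟩ := eventually_atTop.1
    ((eventually_map.1 hb).and (hf.and (hVf.and (hff'.and hK.bound))))
  have hdecr : ∀ {c x y}, T ≤ x → x ≤ y → (∀ u ∈ Icc x y, c ≤ f u) → V y - V x ≤ -c * (y - x) :=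
    fun hx hxy hc => sub_le_mul_sub_of_hasDerivAt_le (fun u hu => (hT u (hx.trans hu.1)).2.2.1)
      (fun u hu => neg_le_neg (hc u hu)) hxy
  have hlip : ∀ {x y}, T ≤ x → x ≤ y → f x - K * (y - x) ≤ f y := fun hx hxy => by
    have := sub_le_mul_sub_of_hasDerivAt_le (f := fun u => -f u) (C := K)
      (fun u hu => (hT u (hx.trans hu.1)).2.2.2.1.neg)
      (fun u hu => by
        have := (hT u (hx.trans hu.1)).2.2.2.2
        rw [norm_one, mul_one, Real.norm_eq_abs] at this
        linarith [neg_abs_le (f' u)]) hxy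
    linarith
  have hV_anti : AntitoneOn V (Ici T) := fun x hx y _ hxy => by
    linarith [hdecr (c := 0) hx hxy fun u hu => (hT u (hx.trans hu.1)).2.1]
  refine tendsto_order.2 ⟨fun a ha => hf.mono fun t ht => ha.trans_le ht, fun ε hε => ?_⟩
  by_contra hfreq
  rw [not_eventually] at hfreq
  simp only [not_lt] at hfreq
  -- If `ε ≤ f t`, the derivative bound keeps `f ≥ ε / 2` on `[t, t + δ]`, so `V` drops by
  -- `ε δ / 2` there; but these drops tend to zero because `V` converges.
  set δ := ε / (2 * K) with hδ
  have hδ0 : 0 < δ := by positivity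
  have hKδ : K * δ = ε / 2 := by rw [hδ]; field_simp
  obtain ⟨t, hft, hgap, hTt⟩ := (hfreq.and_eventually
    (((tendsto_sub_comp_add_of_antitoneOn hV_anti (fun t ht => (hT t ht).1) δ).eventually
      (gt_mem_nhds (by positivity : 0 < ε / 2 * δ))).and (eventually_ge_atTop T))).exists
  have hband : ∀ u ∈ Icc t (t + δ), ε / 2 ≤ f u := fun u hu => by
    nlinarith [hlip hTt hu.1, hu.2]
  nlinarith [hdecr hTt (by linarith : t ≤ t + δ) hband]

section Asymptotics

variable {α E : Type*} {l : Filter α}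

theorem isBigO_one_of_abs_le {f : α → ℝ} {B : ℝ} (h : ∀ t, |f t| ≤ B) :
    f =O[l] (fun _ => (1 : ℝ)) :=
  IsBigO.of_bound B (Eventually.of_forall fun t => by simpa using h t)

theorem isBigO_one_of_mul_norm_sq_le [SeminormedAddCommGroup E] {x : α → E} {c B : ℝ}
    (hc : 0 < c) (h : ∀ᶠ t in l, c * ‖x t‖ ^ 2 ≤ B) : x =O[l] (fun _ => (1 : ℝ)) := by
  refine IsBigO.of_bound (max 1 (B / c)) (h.mono fun t ht => ?_)
  rw [norm_one, mul_one, le_max_iff, le_div_iff₀ hc]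
  by_cases h1 : ‖x t‖ ≤ 1
  · exact Or.inl h1
  · have : ‖x t‖ ≤ ‖x t‖ ^ 2 := by nlinarith
    right; nlinarith

theorem tendsto_zero_of_mul_norm_sq_le [SeminormedAddCommGroup E] {x : α → E} {g : α → ℝ}
    {c : ℝ} (hc : 0 < c) (h : ∀ t, c * ‖x t‖ ^ 2 ≤ g t) (hg : Tendsto g l (𝓝 0)) :
    Tendsto x l (𝓝 0) := by
  refine squeeze_zero_norm (fun t => ?_) (by simpa using (hg.div_const c).sqrt)
  exact Real.le_sqrt_of_sq_le ((le_div_iff₀' hc).2 (h t))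

variable [NormedAddCommGroup E] [InnerProductSpace ℝ E]

theorem mul_norm_le_of_mul_norm_sq_le_inner {x y : E} {c : ℝ} (h : c * ‖x‖ ^ 2 ≤ ⟪x, y⟫) :
    c * ‖x‖ ≤ ‖y‖ := by
  rcases (norm_nonneg x).eq_or_lt with hx | hx
  · rw [← hx, mul_zero]; exact norm_nonneg y
  · have := h.trans (real_inner_le_norm x y)
    nlinarith

theorem isBigO_one_inner {x y : α → E} (hx : x =O[l] (fun _ => (1 : ℝ)))
    (hy : y =O[l] (fun _ => (1 : ℝ))) : (fun t => ⟪x t, y t⟫) =O[l] (fun _ => (1 : ℝ)) := by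
  have h : (fun t => ⟪x t, y t⟫) =O[l] (fun t => ‖x t‖ * ‖y t‖) :=
    isBigO_of_le _ fun t => by simpa using abs_real_inner_le_norm (x t) (y t)
  simpa using h.trans (hx.norm_left.mul hy.norm_left)

variable {ι κ : Type*} [Fintype ι] [Fintype κ]

theorem isBigO_one_toLp_mulVec {A : α → Matrix ι κ ℝ} {x : α → EuclideanSpace ℝ κ}
    (hA : ∀ i j, (fun t => A t i j) =O[l] (fun _ => (1 : ℝ)))
    (hx : x =O[l] (fun _ => (1 : ℝ))) :
    (fun t => toLp 2 (A t *ᵥ ofLp (x t))) =O[l] (fun _ => (1 : ℝ)) := by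
  have hxj : ∀ j, (fun t => ofLp (x t) j) =O[l] (fun _ => (1 : ℝ)) := fun j =>
    (isBigO_of_le _ fun t => PiLp.norm_apply_le (x t) j).trans hx
  have hAx : (fun t => A t *ᵥ ofLp (x t)) =O[l] (fun _ => (1 : ℝ)) :=
    isBigO_pi.2 fun i => IsBigO.fun_sum fun j _ => by simpa using (hA i j).mul (hxj j)
  exact ((PiLp.continuousLinearEquiv 2 ℝ fun _ : ι => ℝ).symm.isBigO_comp _ l).trans hAx

theorem isBigO_one_toLp_const_mulVec (A : Matrix ι κ ℝ) {x : α → EuclideanSpace ℝ κ}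
    (hx : x =O[l] (fun _ => (1 : ℝ))) :
    (fun t => toLp 2 (A *ᵥ ofLp (x t))) =O[l] (fun _ => (1 : ℝ)) :=
  isBigO_one_toLp_mulVec (fun i j => isBigO_const_one ℝ (A i j) l) hx

theorem isBigO_one_of_coercive_mulVec {A : α → Matrix ι ι ℝ}
    {x : α → EuclideanSpace ℝ ι} {c : ℝ} (hc : 0 < c)
    (hA : ∀ t y, c * ‖y‖ ^ 2 ≤ ⟪y, toLp 2 (A t *ᵥ ofLp y)⟫)
    (hAx : (fun t => toLp 2 (A t *ᵥ ofLp (x t))) =O[l] (fun _ => (1 : ℝ))) :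
    x =O[l] (fun _ => (1 : ℝ)) :=
  (IsBigO.of_bound c⁻¹ (Eventually.of_forall fun t => by
    rw [← div_eq_inv_mul, le_div_iff₀' hc]
    exact mul_norm_le_of_mul_norm_sq_le_inner (hA t (x t)))).trans hAx

end Asymptotics

section SlidingControl

variable {ι κ μ : Type*} [Fintype ι] [Fintype κ] [Fintype μ]

noncomputable def slidingLyapunov (M : ℝ → Matrix ι ι ℝ) (K : Matrix ι ι ℝ) (Γ : Matrix κ κ ℝ)
    (P : Matrix μ μ ℝ) (s e : ℝ → EuclideanSpace ℝ ι) (θ : ℝ → EuclideanSpace ℝ κ)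
    (F : ℝ → EuclideanSpace ℝ μ) (t : ℝ) : ℝ :=
  (⟪s t, toLp 2 (M t *ᵥ ofLp (s t))⟫ + ⟪e t, toLp 2 (K *ᵥ ofLp (e t))⟫
    + ⟪θ t, toLp 2 (Γ *ᵥ ofLp (θ t))⟫ + ⟪F t, toLp 2 (P *ᵥ ofLp (F t))⟫) / 2

theorem sliding_energy_balance [DecidableEq κ] [DecidableEq μ]
    {M M' C Kv Kp : Matrix ι ι ℝ} {Y : Matrix ι κ ℝ} {J : Matrix μ ι ℝ} {L : Matrix κ κ ℝ}
    {P : Matrix μ μ ℝ} {lam : ℝ} {e e' s s' : EuclideanSpace ℝ ι} {θ θ' : EuclideanSpace ℝ κ}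
    {F F' : EuclideanSpace ℝ μ}
    (hs : s = e' + lam • e) (hskew : ⟪s, toLp 2 ((M' - 2 • C) *ᵥ ofLp s)⟫ = 0)
    (hKp : Kpᵀ = Kp) (hL : IsUnit L.det) (hP : IsUnit P.det)
    (hθ' : ofLp θ' = L *ᵥ Yᵀ *ᵥ ofLp s) (hF' : ofLp F' = -(P⁻¹ *ᵥ J *ᵥ ofLp s))
    (hloop : M *ᵥ ofLp s' + C *ᵥ ofLp s + Y *ᵥ ofLp θ + Kv *ᵥ ofLp e' + Kp *ᵥ ofLp e
      - Jᵀ *ᵥ ofLp F = 0) :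
    ⟪s, toLp 2 (M' *ᵥ ofLp s)⟫ / 2 + ⟪s, toLp 2 (M *ᵥ ofLp s')⟫
      + ⟪e, toLp 2 ((Kp + lam • Kv) *ᵥ ofLp e')⟫ + ⟪θ, toLp 2 (L⁻¹ *ᵥ ofLp θ')⟫
      + ⟪F, toLp 2 (P *ᵥ ofLp F')⟫
      = -(⟪e', toLp 2 (Kv *ᵥ ofLp e')⟫ + lam * ⟪e, toLp 2 (Kp *ᵥ ofLp e)⟫) := by
  have hLθ : L⁻¹ *ᵥ ofLp θ' = Yᵀ *ᵥ ofLp s := by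
    rw [hθ', mulVec_mulVec, nonsing_inv_mul _ hL, one_mulVec]
  have hPF : P *ᵥ ofLp F' = -(J *ᵥ ofLp s) := by
    rw [hF', mulVec_neg, mulVec_mulVec, mul_nonsing_inv _ hP, one_mulVec]
  have hθ : ofLp θ ⬝ᵥ Yᵀ *ᵥ ofLp s = ofLp s ⬝ᵥ Y *ᵥ ofLp θ := by
    rw [dotProduct_mulVec, vecMul_transpose, dotProduct_comm]
  have hF : ofLp F ⬝ᵥ J *ᵥ ofLp s = ofLp s ⬝ᵥ Jᵀ *ᵥ ofLp F := by
    rw [dotProduct_mulVec, ← mulVec_transpose, dotProduct_comm]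
  have hKp_comm : ofLp e ⬝ᵥ Kp *ᵥ ofLp e' = ofLp e' ⬝ᵥ Kp *ᵥ ofLp e := by
    rw [dotProduct_mulVec, ← mulVec_transpose, hKp, dotProduct_comm]
  have hsKv :
      ofLp s ⬝ᵥ Kv *ᵥ ofLp e' = ofLp e' ⬝ᵥ Kv *ᵥ ofLp e' + lam * ofLp e ⬝ᵥ Kv *ᵥ ofLp e' := by
    rw [hs, ofLp_add, ofLp_smul, add_dotProduct, smul_dotProduct, smul_eq_mul]
  have hsKp :
      ofLp s ⬝ᵥ Kp *ᵥ ofLp e = ofLp e' ⬝ᵥ Kp *ᵥ ofLp e + lam * ofLp e ⬝ᵥ Kp *ᵥ ofLp e := by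
    rw [hs, ofLp_add, ofLp_smul, add_dotProduct, smul_dotProduct, smul_eq_mul]
  have hloop_s := congrArg (ofLp s ⬝ᵥ ·) hloop
  simp only [dotProduct_add, dotProduct_sub, dotProduct_zero] at hloop_s
  simp only [inner_toLp_mulVec] at hskew ⊢
  simp only [hLθ, hPF, sub_mulVec, add_mulVec, smul_mulVec, dotProduct_sub,
    dotProduct_add, dotProduct_smul, dotProduct_neg, smul_eq_mul, two_nsmul] at hskew ⊢
  linear_combination (1 / 2 : ℝ) * hskew + hloop_s + hθ - hF + hKp_comm - hsKv - hsKp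

theorem hasDerivAt_slidingLyapunov [DecidableEq κ] [DecidableEq μ] {M : ℝ → Matrix ι ι ℝ}
    {M' C Kv Kp : Matrix ι ι ℝ} {Y : Matrix ι κ ℝ} {J : Matrix μ ι ℝ} {L : Matrix κ κ ℝ}
    {P : Matrix μ μ ℝ} {lam t : ℝ} {s e : ℝ → EuclideanSpace ℝ ι}
    {θ : ℝ → EuclideanSpace ℝ κ} {F : ℝ → EuclideanSpace ℝ μ} {e' s' : EuclideanSpace ℝ ι}
    {θ' : EuclideanSpace ℝ κ} {F' : EuclideanSpace ℝ μ}
    (hs : s t = e' + lam • e t) (he : HasDerivAt e e' t) (hs' : HasDerivAt s s' t)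
    (hθ : HasDerivAt θ θ' t) (hF : HasDerivAt F F' t)
    (hM' : ∀ i j, HasDerivAt (fun τ => M τ i j) (M' i j) t) (hM : (M t)ᵀ = M t)
    (hskew : ⟪s t, toLp 2 ((M' - 2 • C) *ᵥ ofLp (s t))⟫ = 0)
    (hKv : Kvᵀ = Kv) (hKp : Kpᵀ = Kp) (hL : L.PosDef) (hP : P.PosDef)
    (hθ' : ofLp θ' = L *ᵥ Yᵀ *ᵥ ofLp (s t)) (hF' : ofLp F' = -(P⁻¹ *ᵥ J *ᵥ ofLp (s t)))
    (hloop : M t *ᵥ ofLp s' + C *ᵥ ofLp (s t) + Y *ᵥ ofLp (θ t) + Kv *ᵥ ofLp e'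
      + Kp *ᵥ ofLp (e t) - Jᵀ *ᵥ ofLp (F t) = 0) :
    HasDerivAt (slidingLyapunov M (Kp + lam • Kv) L⁻¹ P s e θ F)
      (-(⟪e', toLp 2 (Kv *ᵥ ofLp e')⟫ + lam * ⟪e t, toLp 2 (Kp *ᵥ ofLp (e t))⟫)) t := by
  have hK : (Kp + lam • Kv)ᵀ = Kp + lam • Kv := by rw [transpose_add, transpose_smul, hKp, hKv]
  have h1 := hasDerivAt_inner_toLp_mulVec_self hM' hM hs'
  have h2 := hasDerivAt_inner_toLp_const_mulVec_self hK he
  have h3 := hasDerivAt_inner_toLp_const_mulVec_self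
    (isHermitian_iff_isSymm.1 hL.inv.isHermitian).eq hθ
  have h4 := hasDerivAt_inner_toLp_const_mulVec_self
    (isHermitian_iff_isSymm.1 hP.isHermitian).eq hF
  refine ((((h1.add h2).add h3).add h4).div_const 2).congr_deriv ?_
  have := sliding_energy_balance hs hskew hKp ((isUnit_iff_isUnit_det L).1 hL.isUnit)
    ((isUnit_iff_isUnit_det P).1 hP.isUnit) hθ' hF' hloop
  linarith

theorem mul_norm_sq_add_le_slidingLyapunov {M : ℝ → Matrix ι ι ℝ} {K : Matrix ι ι ℝ}
    {Γ : Matrix κ κ ℝ} {P : Matrix μ μ ℝ} {s e : ℝ → EuclideanSpace ℝ ι}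
    {θ : ℝ → EuclideanSpace ℝ κ} {F : ℝ → EuclideanSpace ℝ μ} {cM cK cΓ cP : ℝ}
    (hM : ∀ t x, cM * ‖x‖ ^ 2 ≤ ⟪x, toLp 2 (M t *ᵥ ofLp x)⟫)
    (hK : ∀ x, cK * ‖x‖ ^ 2 ≤ ⟪x, toLp 2 (K *ᵥ ofLp x)⟫)
    (hΓ : ∀ x, cΓ * ‖x‖ ^ 2 ≤ ⟪x, toLp 2 (Γ *ᵥ ofLp x)⟫)
    (hP : ∀ x, cP * ‖x‖ ^ 2 ≤ ⟪x, toLp 2 (P *ᵥ ofLp x)⟫) (t : ℝ) :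
    cM * ‖s t‖ ^ 2 + cK * ‖e t‖ ^ 2 + cΓ * ‖θ t‖ ^ 2 + cP * ‖F t‖ ^ 2
      ≤ 2 * slidingLyapunov M K Γ P s e θ F t := by
  have := hM t (s t); have := hK (e t); have := hΓ (θ t); have := hP (F t)
  simp only [slidingLyapunov]
  linarith

theorem slidingLyapunov_nonneg {M : ℝ → Matrix ι ι ℝ} {K : Matrix ι ι ℝ} {Γ : Matrix κ κ ℝ}
    {P : Matrix μ μ ℝ} {s e : ℝ → EuclideanSpace ℝ ι} {θ : ℝ → EuclideanSpace ℝ κ}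
    {F : ℝ → EuclideanSpace ℝ μ} {cM cK cΓ cP : ℝ} (hcM : 0 ≤ cM) (hcK : 0 ≤ cK)
    (hcΓ : 0 ≤ cΓ) (hcP : 0 ≤ cP)
    (hM : ∀ t x, cM * ‖x‖ ^ 2 ≤ ⟪x, toLp 2 (M t *ᵥ ofLp x)⟫)
    (hK : ∀ x, cK * ‖x‖ ^ 2 ≤ ⟪x, toLp 2 (K *ᵥ ofLp x)⟫)
    (hΓ : ∀ x, cΓ * ‖x‖ ^ 2 ≤ ⟪x, toLp 2 (Γ *ᵥ ofLp x)⟫)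
    (hP : ∀ x, cP * ‖x‖ ^ 2 ≤ ⟪x, toLp 2 (P *ᵥ ofLp x)⟫) (t : ℝ) :
    0 ≤ slidingLyapunov M K Γ P s e θ F t := by
  have := mul_norm_sq_add_le_slidingLyapunov (s := s) (e := e) (θ := θ) (F := F) hM hK hΓ hP t
  have :
      0 ≤ cM * ‖s t‖ ^ 2 + cK * ‖e t‖ ^ 2 + cΓ * ‖θ t‖ ^ 2 + cP * ‖F t‖ ^ 2 := by positivity
  linarith

theorem isBigO_one_of_slidingLyapunov_le {M : ℝ → Matrix ι ι ℝ} {K : Matrix ι ι ℝ}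
    {Γ : Matrix κ κ ℝ} {P : Matrix μ μ ℝ} {s e : ℝ → EuclideanSpace ℝ ι}
    {θ : ℝ → EuclideanSpace ℝ κ} {F : ℝ → EuclideanSpace ℝ μ} {l : Filter ℝ}
    {cM cK cΓ cP B : ℝ} (hcM : 0 < cM) (hcK : 0 < cK) (hcΓ : 0 < cΓ) (hcP : 0 < cP)
    (hM : ∀ t x, cM * ‖x‖ ^ 2 ≤ ⟪x, toLp 2 (M t *ᵥ ofLp x)⟫)
    (hK : ∀ x, cK * ‖x‖ ^ 2 ≤ ⟪x, toLp 2 (K *ᵥ ofLp x)⟫)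
    (hΓ : ∀ x, cΓ * ‖x‖ ^ 2 ≤ ⟪x, toLp 2 (Γ *ᵥ ofLp x)⟫)
    (hP : ∀ x, cP * ‖x‖ ^ 2 ≤ ⟪x, toLp 2 (P *ᵥ ofLp x)⟫)
    (hV : ∀ᶠ t in l, slidingLyapunov M K Γ P s e θ F t ≤ B) :
    s =O[l] (fun _ => (1 : ℝ)) ∧ e =O[l] (fun _ => (1 : ℝ)) ∧ θ =O[l] (fun _ => (1 : ℝ))
      ∧ F =O[l] (fun _ => (1 : ℝ)) := by
  have h := mul_norm_sq_add_le_slidingLyapunov (s := s) (e := e) (θ := θ) (F := F) hM hK hΓ hP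
  refine ⟨isBigO_one_of_mul_norm_sq_le (B := 2 * B) hcM ?_,
    isBigO_one_of_mul_norm_sq_le (B := 2 * B) hcK ?_,
    isBigO_one_of_mul_norm_sq_le (B := 2 * B) hcΓ ?_,
    isBigO_one_of_mul_norm_sq_le (B := 2 * B) hcP ?_⟩ <;>
  exact hV.mono fun t ht => by
    have : 0 ≤ cM * ‖s t‖ ^ 2 := by positivity
    have : 0 ≤ cK * ‖e t‖ ^ 2 := by positivity
    have : 0 ≤ cΓ * ‖θ t‖ ^ 2 := by positivity
    have : 0 ≤ cP * ‖F t‖ ^ 2 := by positivity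
    linarith [h t]

theorem isBigO_one_of_slidingLoop {α : Type*} {l : Filter α} {M C : α → Matrix ι ι ℝ}
    {Kv Kp : Matrix ι ι ℝ} {Y : α → Matrix ι κ ℝ} {J : α → Matrix μ ι ℝ}
    {s s' e e' : α → EuclideanSpace ℝ ι} {θ : α → EuclideanSpace ℝ κ}
    {F : α → EuclideanSpace ℝ μ} {m₀ : ℝ} (hm₀ : 0 < m₀)
    (hM : ∀ t x, m₀ * ‖x‖ ^ 2 ≤ ⟪x, toLp 2 (M t *ᵥ ofLp x)⟫)
    (hC : ∃ B, ∀ t i j, |C t i j| ≤ B) (hY : ∃ B, ∀ t i j, |Y t i j| ≤ B)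
    (hJ : ∃ B, ∀ t i j, |J t i j| ≤ B)
    (hs : s =O[l] (fun _ => (1 : ℝ))) (he : e =O[l] (fun _ => (1 : ℝ)))
    (he' : e' =O[l] (fun _ => (1 : ℝ))) (hθ : θ =O[l] (fun _ => (1 : ℝ)))
    (hF : F =O[l] (fun _ => (1 : ℝ)))
    (hloop : ∀ᶠ t in l, M t *ᵥ ofLp (s' t) + C t *ᵥ ofLp (s t) + Y t *ᵥ ofLp (θ t)
      + Kv *ᵥ ofLp (e' t) + Kp *ᵥ ofLp (e t) - (J t)ᵀ *ᵥ ofLp (F t) = 0) :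
    s' =O[l] (fun _ => (1 : ℝ)) := by
  obtain ⟨BC, hBC⟩ := hC
  obtain ⟨BY, hBY⟩ := hY
  obtain ⟨BJ, hBJ⟩ := hJ
  refine isBigO_one_of_coercive_mulVec hm₀ hM ?_
  have hJT : ∀ i j, (fun t => (J t)ᵀ i j) =O[l] (fun _ => (1 : ℝ)) := fun i j =>
    isBigO_one_of_abs_le (hBJ · j i)
  have hrhs := ((((isBigO_one_toLp_mulVec hJT hF).sub
    (isBigO_one_toLp_mulVec (fun i j => isBigO_one_of_abs_le (hBC · i j)) hs)).sub
    (isBigO_one_toLp_mulVec (fun i j => isBigO_one_of_abs_le (hBY · i j)) hθ)).sub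
    (isBigO_one_toLp_const_mulVec Kv he')).sub (isBigO_one_toLp_const_mulVec Kp he)
  refine hrhs.congr' (hloop.mono fun t ht => ?_) EventuallyEq.rfl
  simp only [← toLp_sub]
  congr 1
  rw [← sub_eq_zero, ← neg_eq_zero, ← ht]
  abel

theorem tendsto_zero_of_hasDerivAt_neg_dissipation {V : ℝ → ℝ} {e : ℝ → EuclideanSpace ℝ ι}
    {Kv Kp : Matrix ι ι ℝ} {lam cv cp : ℝ} (hlam : 0 < lam) (he : ContDiff ℝ 2 e)
    (hKv : Kvᵀ = Kv) (hcv : 0 < cv) (hKv_ge : ∀ x, cv * ‖x‖ ^ 2 ≤ ⟪x, toLp 2 (Kv *ᵥ ofLp x)⟫)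
    (hKp : Kpᵀ = Kp) (hcp : 0 < cp) (hKp_ge : ∀ x, cp * ‖x‖ ^ 2 ≤ ⟪x, toLp 2 (Kp *ᵥ ofLp x)⟫)
    (hV_bdd : IsBoundedUnder (· ≥ ·) atTop V)
    (hV : ∀ t, 0 ≤ t → HasDerivAt V (-(⟪deriv e t, toLp 2 (Kv *ᵥ ofLp (deriv e t))⟫
      + lam * ⟪e t, toLp 2 (Kp *ᵥ ofLp (e t))⟫)) t)
    (he_bdd : e =O[atTop] (fun _ => (1 : ℝ))) (he'_bdd : deriv e =O[atTop] (fun _ => (1 : ℝ)))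
    (he''_bdd : deriv (deriv e) =O[atTop] (fun _ => (1 : ℝ))) :
    Tendsto e atTop (𝓝 0) ∧ Tendsto (deriv e) atTop (𝓝 0) := by
  set f := fun t => ⟪deriv e t, toLp 2 (Kv *ᵥ ofLp (deriv e t))⟫
    + lam * ⟪e t, toLp 2 (Kp *ᵥ ofLp (e t))⟫
  have hf_ge : ∀ t, cv * ‖deriv e t‖ ^ 2 + lam * (cp * ‖e t‖ ^ 2) ≤ f t := fun t =>
    add_le_add (hKv_ge _) (mul_le_mul_of_nonneg_left (hKp_ge _) hlam.le)
  have hf' : ∀ t, HasDerivAt f (2 * ⟪deriv e t, toLp 2 (Kv *ᵥ ofLp (deriv (deriv e) t))⟫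
      + lam * (2 * ⟪e t, toLp 2 (Kp *ᵥ ofLp (deriv e t))⟫)) t := fun t =>
    (hasDerivAt_inner_toLp_const_mulVec_self hKv (he.differentiable_deriv_two t).hasDerivAt).add
      ((hasDerivAt_inner_toLp_const_mulVec_self hKp
        (he.differentiable (by norm_num) t).hasDerivAt).const_mul lam)
  have hf'_bdd := ((isBigO_one_inner he'_bdd
      (isBigO_one_toLp_const_mulVec Kv he''_bdd)).const_mul_left 2).add
    (((isBigO_one_inner he_bdd
      (isBigO_one_toLp_const_mulVec Kp he'_bdd)).const_mul_left 2).const_mul_left lam)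
  have hf := tendsto_zero_of_hasDerivAt_neg hV_bdd
    (Eventually.of_forall fun t => le_trans (by positivity) (hf_ge t))
    ((eventually_ge_atTop 0).mono hV) (Eventually.of_forall hf') hf'_bdd
  refine ⟨tendsto_zero_of_mul_norm_sq_le (mul_pos hlam hcp) (fun t => ?_) hf,
    tendsto_zero_of_mul_norm_sq_le hcv (fun t => ?_) hf⟩ <;>
  nlinarith [hf_ge t, mul_nonneg hcv.le (sq_nonneg ‖deriv e t‖),
    mul_nonneg hcp.le (sq_nonneg ‖e t‖)]

end SlidingControl

theorem adaptive_sliding_convergence_general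
    (n p m : ℕ)
    (q qd : ℝ → EuclideanSpace ℝ (Fin n))
    (hq : ContDiff ℝ 2 q) (hqd : ContDiff ℝ 2 qd)
    (Δq : ℝ → EuclideanSpace ℝ (Fin n)) (hΔq : ∀ t, Δq t = q t - qd t)
    (lam : ℝ) (hlam : 0 < lam)
    (s : ℝ → EuclideanSpace ℝ (Fin n))
    (hs : ∀ t, s t = deriv Δq t + lam • Δq t)
    (M C M' : ℝ → Matrix (Fin n) (Fin n) ℝ)
    (hM_diff : ∀ i j t, HasDerivAt (fun τ => M τ i j) (M' t i j) t)
    (hM_symm : ∀ t, (M t)ᵀ = M t)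
    (m₀ : ℝ) (hm₀ : 0 < m₀)
    (hM_lb : ∀ (t : ℝ) (x : EuclideanSpace ℝ (Fin n)),
      m₀ * ‖x‖ ^ 2 ≤ ⟪x, WithLp.toLp 2 ((M t).mulVec x)⟫)
    (hC_bdd : ∃ B, ∀ t i j, |C t i j| ≤ B)
    (hskew : ∀ (t : ℝ) (x : EuclideanSpace ℝ (Fin n)),
      ⟪x, WithLp.toLp 2 ((M' t - 2 • C t).mulVec x)⟫ = 0)
    (Y : ℝ → Matrix (Fin n) (Fin p) ℝ) (J : ℝ → Matrix (Fin m) (Fin n) ℝ)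
    (hY_bdd : ∃ B, ∀ t i j, |Y t i j| ≤ B)
    (hJ_bdd : ∃ B, ∀ t i j, |J t i j| ≤ B)
    (θd : EuclideanSpace ℝ (Fin p)) (Fext : EuclideanSpace ℝ (Fin m))
    (Kv Kp : Matrix (Fin n) (Fin n) ℝ)
    (hKv_symm : Kvᵀ = Kv)
    (hKv_pd : ∀ x : EuclideanSpace ℝ (Fin n), x ≠ 0 → 0 < ⟪x, WithLp.toLp 2 (Kv.mulVec x)⟫)
    (hKp_symm : Kpᵀ = Kp)
    (hKp_pd : ∀ x : EuclideanSpace ℝ (Fin n), x ≠ 0 → 0 < ⟪x, WithLp.toLp 2 (Kp.mulVec x)⟫)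
    (Ld : Matrix (Fin p) (Fin p) ℝ)
    (hLd_symm : Ldᵀ = Ld)
    (hLd_pd : ∀ x : EuclideanSpace ℝ (Fin p), x ≠ 0 → 0 < ⟪x, WithLp.toLp 2 (Ld.mulVec x)⟫)
    (P : Matrix (Fin m) (Fin m) ℝ)
    (hP_symm : Pᵀ = P)
    (hP_pd : ∀ x : EuclideanSpace ℝ (Fin m), x ≠ 0 → 0 < ⟪x, WithLp.toLp 2 (P.mulVec x)⟫)
    (θhat : ℝ → EuclideanSpace ℝ (Fin p)) (Fhat : ℝ → EuclideanSpace ℝ (Fin m))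
    (hθhat_diff : Differentiable ℝ θhat) (hFhat_diff : Differentiable ℝ Fhat)
    (hθ_law : ∀ t, deriv θhat t = -(Ld.mulVec ((Y t)ᵀ.mulVec (s t))))
    (hF_law : ∀ t, deriv Fhat t = P⁻¹.mulVec ((J t).mulVec (s t)))
    (hclosed : ∀ t, 0 ≤ t →
      (M t).mulVec (deriv (fun τ => WithLp.ofLp (s τ)) t) + (C t).mulVec (s t) + (Y t).mulVec (θd - θhat t)
        + Kv.mulVec (deriv (fun τ => WithLp.ofLp (Δq τ)) t) + Kp.mulVec (Δq t)
        - (J t)ᵀ.mulVec (Fext - Fhat t) = 0) :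
    Tendsto Δq atTop (𝓝 0) ∧ Tendsto (deriv Δq) atTop (𝓝 0) := by
  have hΔq_C2 : ContDiff ℝ 2 Δq := by rw [show Δq = _ from funext hΔq]; exact hq.sub hqd
  have he (t) : HasDerivAt Δq (deriv Δq t) t :=
    (hΔq_C2.differentiable (by norm_num) t).hasDerivAt
  have hs' (t) : HasDerivAt s (deriv (deriv Δq) t + lam • deriv Δq t) t := by
    rw [show s = _ from funext hs]
    exact (hΔq_C2.differentiable_deriv_two t).hasDerivAt.add ((he t).const_smul lam)
  have hloop (t : ℝ) (ht : 0 ≤ t) : M t *ᵥ ofLp (deriv (deriv Δq) t + lam • deriv Δq t)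
      + C t *ᵥ ofLp (s t) + Y t *ᵥ ofLp (θd - θhat t) + Kv *ᵥ ofLp (deriv Δq t)
      + Kp *ᵥ ofLp (Δq t) - (J t)ᵀ *ᵥ ofLp (Fext - Fhat t) = 0 := by
    simpa only [(hs' t).ofLp.deriv, (he t).ofLp.deriv, ofLp_sub] using hclosed t ht
  have hLd := posDef_of_inner_toLp_mulVec_pos hLd_symm hLd_pd
  obtain ⟨cv, hcv, hKv_ge⟩ := exists_pos_mul_norm_sq_le_inner_toLp_mulVec Kv hKv_pd
  obtain ⟨cp, hcp, hKp_ge⟩ := exists_pos_mul_norm_sq_le_inner_toLp_mulVec Kp hKp_pd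
  obtain ⟨cθ, hcθ, hLdinv_ge⟩ :=
    exists_pos_mul_norm_sq_le_inner_toLp_mulVec Ld⁻¹ hLd.inv.inner_toLp_mulVec_pos
  obtain ⟨cF, hcF, hP_ge⟩ := exists_pos_mul_norm_sq_le_inner_toLp_mulVec P hP_pd
  have hK_ge (x) : (cp + lam * cv) * ‖x‖ ^ 2 ≤ ⟪x, toLp 2 ((Kp + lam • Kv) *ᵥ ofLp x)⟫ := by
    rw [inner_toLp_add_smul_mulVec]
    nlinarith [hKp_ge x, hKv_ge x]
  set V := slidingLyapunov M (Kp + lam • Kv) Ld⁻¹ P s Δq (θd - θhat ·) (Fext - Fhat ·)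
  have hV' (t) (ht : 0 ≤ t) := hasDerivAt_slidingLyapunov (hs t) (he t) (hs' t)
    ((hθhat_diff t).hasDerivAt.const_sub θd) ((hFhat_diff t).hasDerivAt.const_sub Fext)
    (hM_diff · · t) (hM_symm t) (hskew t (s t)) hKv_symm hKp_symm hLd
    (posDef_of_inner_toLp_mulVec_pos hP_symm hP_pd) (by rw [ofLp_neg, hθ_law, neg_neg])
    (by rw [ofLp_neg, hF_law]) (hloop t ht)
  have hV_le (t) (ht : 0 ≤ t) : V t ≤ V 0 := by
    have := sub_le_mul_sub_of_hasDerivAt_le (C := 0) (fun u hu => hV' u hu.1) (fun u _ =>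
      neg_nonpos.2 (add_nonneg (le_trans (by positivity) (hKv_ge _))
        (mul_nonneg hlam.le (le_trans (by positivity) (hKp_ge _))))) ht
    linarith
  obtain ⟨hs_bdd, he_bdd, hθ_bdd, hF_bdd⟩ := isBigO_one_of_slidingLyapunov_le hm₀
    (by positivity) hcθ hcF hM_lb hK_ge hLdinv_ge hP_ge (eventually_atTop.2 ⟨0, hV_le⟩)
  have he'_bdd : deriv Δq =O[atTop] (fun _ => (1 : ℝ)) :=
    (hs_bdd.sub (he_bdd.const_smul_left lam)).congr_left fun t => by simp [hs]
  have hs'_bdd := isBigO_one_of_slidingLoop hm₀ hM_lb hC_bdd hY_bdd hJ_bdd hs_bdd he_bdd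
    he'_bdd hθ_bdd hF_bdd (eventually_atTop.2 ⟨0, hloop⟩)
  have he''_bdd : deriv (deriv Δq) =O[atTop] (fun _ => (1 : ℝ)) :=
    (hs'_bdd.sub (he'_bdd.const_smul_left lam)).congr_left fun t => by simp
  exact tendsto_zero_of_hasDerivAt_neg_dissipation hlam hΔq_C2 hKv_symm hcv hKv_ge hKp_symm hcp
    hKp_ge (isBoundedUnder_of ⟨0, slidingLyapunov_nonneg hm₀.le (by positivity) hcθ.le hcF.le hM_lb
      hK_ge hLdinv_ge hP_ge⟩) hV' he_bdd he'_bdd he''_bdd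

/-- **Theorem 4.1.1** (adaptive-sliding controller convergence).
Under the adaptive laws `θ̂' = -L_d Yᵀ s`, `F̂' = P⁻¹ J s` and the closed-loop dynamics
`M ṡ + C s + Y (θ_d - θ̂) + K_v Δq' + K_p Δq - Jᵀ (F_ext - F̂) = 0`, the tracking error
`Δq = q - q_d` and its velocity `Δq'` converge to the origin. -/
theorem adaptive_sliding_convergence
    (n p m : ℕ) (hn : 0 < n) (hp : 0 < p) (hm : 0 < m)
    (q qd : ℝ → EuclideanSpace ℝ (Fin n))
    (hq : ContDiff ℝ 2 q) (hqd : ContDiff ℝ 2 qd)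
    (hqd_bdd : ∃ B, ∀ t, ‖qd t‖ ≤ B)
    (hqd'_bdd : ∃ B, ∀ t, ‖deriv qd t‖ ≤ B)
    (hqd''_bdd : ∃ B, ∀ t, ‖deriv (deriv qd) t‖ ≤ B)
    (Δq : ℝ → EuclideanSpace ℝ (Fin n)) (hΔq : ∀ t, Δq t = q t - qd t)
    (lam : ℝ) (hlam : 0 < lam)
    (s : ℝ → EuclideanSpace ℝ (Fin n))
    (hs : ∀ t, s t = deriv Δq t + lam • Δq t)
    (M C M' : ℝ → Matrix (Fin n) (Fin n) ℝ)
    (hM_diff : ∀ i j t, HasDerivAt (fun τ => M τ i j) (M' t i j) t)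
    (hM'_cont : ∀ i j, Continuous fun t => M' t i j)
    (hM_symm : ∀ t, (M t)ᵀ = M t)
    (m₀ m₁ : ℝ) (hm₀ : 0 < m₀) (hm₀₁ : m₀ ≤ m₁)
    (hM_lb : ∀ (t : ℝ) (x : EuclideanSpace ℝ (Fin n)),
      m₀ * ‖x‖ ^ 2 ≤ ⟪x, WithLp.toLp 2 ((M t).mulVec x)⟫)
    (hM_ub : ∀ (t : ℝ) (x : EuclideanSpace ℝ (Fin n)),
      ⟪x, WithLp.toLp 2 ((M t).mulVec x)⟫ ≤ m₁ * ‖x‖ ^ 2)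
    (hC_cont : ∀ i j, Continuous fun t => C t i j)
    (hC_bdd : ∃ B, ∀ t i j, |C t i j| ≤ B)
    (hskew : ∀ (t : ℝ) (x : EuclideanSpace ℝ (Fin n)),
      ⟪x, WithLp.toLp 2 ((M' t - 2 • C t).mulVec x)⟫ = 0)
    (Y : ℝ → Matrix (Fin n) (Fin p) ℝ) (J : ℝ → Matrix (Fin m) (Fin n) ℝ)
    (hY_cont : ∀ i j, Continuous fun t => Y t i j)
    (hY_bdd : ∃ B, ∀ t i j, |Y t i j| ≤ B)
    (hJ_cont : ∀ i j, Continuous fun t => J t i j)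
    (hJ_bdd : ∃ B, ∀ t i j, |J t i j| ≤ B)
    (θd : EuclideanSpace ℝ (Fin p)) (Fext : EuclideanSpace ℝ (Fin m))
    (Kv Kp : Matrix (Fin n) (Fin n) ℝ)
    (hKv_symm : Kvᵀ = Kv)
    (hKv_pd : ∀ x : EuclideanSpace ℝ (Fin n), x ≠ 0 → 0 < ⟪x, WithLp.toLp 2 (Kv.mulVec x)⟫)
    (hKp_symm : Kpᵀ = Kp)
    (hKp_pd : ∀ x : EuclideanSpace ℝ (Fin n), x ≠ 0 → 0 < ⟪x, WithLp.toLp 2 (Kp.mulVec x)⟫)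
    (Ld : Matrix (Fin p) (Fin p) ℝ)
    (hLd_symm : Ldᵀ = Ld)
    (hLd_pd : ∀ x : EuclideanSpace ℝ (Fin p), x ≠ 0 → 0 < ⟪x, WithLp.toLp 2 (Ld.mulVec x)⟫)
    (P : Matrix (Fin m) (Fin m) ℝ)
    (hP_symm : Pᵀ = P)
    (hP_pd : ∀ x : EuclideanSpace ℝ (Fin m), x ≠ 0 → 0 < ⟪x, WithLp.toLp 2 (P.mulVec x)⟫)
    (θhat : ℝ → EuclideanSpace ℝ (Fin p)) (Fhat : ℝ → EuclideanSpace ℝ (Fin m))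
    (hθhat_diff : Differentiable ℝ θhat) (hFhat_diff : Differentiable ℝ Fhat)
    (hθ_law : ∀ t, deriv θhat t = -(Ld.mulVec ((Y t)ᵀ.mulVec (s t))))
    (hF_law : ∀ t, deriv Fhat t = P⁻¹.mulVec ((J t).mulVec (s t)))
    (hclosed : ∀ t, 0 ≤ t →
      (M t).mulVec (deriv (fun τ => WithLp.ofLp (s τ)) t) + (C t).mulVec (s t) + (Y t).mulVec (θd - θhat t)
        + Kv.mulVec (deriv (fun τ => WithLp.ofLp (Δq τ)) t) + Kp.mulVec (Δq t)
        - (J t)ᵀ.mulVec (Fext - Fhat t) = 0) :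
    Tendsto Δq atTop (𝓝 0) ∧ Tendsto (deriv Δq) atTop (𝓝 0) :=
  adaptive_sliding_convergence_general n p m q qd hq hqd Δq hΔq lam hlam s hs M C M' hM_diff hM_symm
    m₀ hm₀ hM_lb hC_bdd hskew Y J hY_bdd hJ_bdd θd Fext Kv Kp hKv_symm hKv_pd hKp_symm hKp_pd Ld
    hLd_symm hLd_pd P hP_symm hP_pd θhat Fhat hθhat_diff hFhat_diff hθ_law hF_law hclosed
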